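/- Let l ≥ 0 and integers m, s with -l ≤ m, s ≤ l and m + s < 0. With U_l^{m,s}(ε) defined by the finite sum U_l^{m,s}(ε) = Σ_{r=max(0,-(m+s))}^{min(l-s,l-m)} (-1)^{l-m-r} C(l+m, m+s+r) C(l-m, r) (cos(ε/2))^{m+s+2r} (sin(ε/2))^{-m-s+2(l-r)}, one has U_l^{m,s}(ε) = (-1)^{l-s} C(l-m, l+s) (cos(ε/2))^{-m-s} (sin(ε/2))^{m-s} · ₂F₁(-l-s, l-s+1, -m-s+1; cos²(ε/2)) for all ε ∈ (0, π). -/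

import Mathlib

open Finset

private lemma triangle_sum (M : ℕ) (f : ℕ → ℕ → ℝ) :
    ∑ n ∈ range (M+1), ∑ i ∈ range (M+1-n), f n i
      = ∑ k ∈ range (M+1), ∑ n ∈ range (k+1), f n (k-n) := by
  rw [Finset.sum_sigma', Finset.sum_sigma']
  refine Finset.sum_nbij' (fun p => ⟨p.1 + p.2, p.1⟩) (fun p => ⟨p.2, p.1 - p.2⟩) ?_ ?_ ?_ ?_ ?_
  · rintro ⟨n, i⟩ h
    simp only [mem_sigma, mem_range] at h ⊢
    omega
  · rintro ⟨k, n⟩ h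
    simp only [mem_sigma, mem_range] at h ⊢
    omega
  · rintro ⟨n, i⟩ h
    simp only [mem_sigma, mem_range] at h
    have h2 : n + i - n = i := by omega
    simp [h2]
  · rintro ⟨k, n⟩ h
    simp only [mem_sigma, mem_range] at h
    have h2 : n + (k - n) = k := by omega
    simp [h2]
  · rintro ⟨n, i⟩ h
    simp only [mem_sigma, mem_range] at h
    simp only [Nat.add_sub_cancel_left]

private lemma vandermonde_sum (A B k : ℕ) :
    ∑ n ∈ range (k+1), A.choose n * B.choose (k-n) = (A+B).choose k := by
  rw [Nat.add_choose_eq, Finset.Nat.sum_antidiagonal_eq_sum_range_succ_mk]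

private lemma perterm (K P n k : ℕ) (hnk : n ≤ k) (hkP : k ≤ P) :
    (K+P).choose (K+n) * (P-n).choose (k-n) * ((K+k).factorial * (P-k).factorial)
      = (K+P).factorial * (K+k).choose (k-n) := by
  have g1 : (P-n).choose (k-n) * (k-n).factorial * (P-k).factorial = (P-n).factorial := by
    have h := Nat.choose_mul_factorial_mul_factorial (show k-n ≤ P-n by omega)
    rwa [show P-n-(k-n) = P-k by omega] at h
  have g2 : (K+P).choose (K+n) * (K+n).factorial * (P-n).factorial = (K+P).factorial := by
    have h := Nat.choose_mul_factorial_mul_factorial (show K+n ≤ K+P by omega)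
    rwa [show K+P-(K+n) = P-n by omega] at h
  have g3 : (K+k).choose (k-n) * (k-n).factorial * (K+n).factorial = (K+k).factorial := by
    have h := Nat.choose_mul_factorial_mul_factorial (show k-n ≤ K+k by omega)
    rwa [show K+k-(k-n) = K+n by omega] at h
  have hpos : 0 < (K+n).factorial * (k-n).factorial :=
    Nat.mul_pos (Nat.factorial_pos _) (Nat.factorial_pos _)
  apply Nat.eq_of_mul_eq_mul_right hpos
  calc (K+P).choose (K+n) * (P-n).choose (k-n) * ((K+k).factorial * (P-k).factorial)
        * ((K+n).factorial * (k-n).factorial)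
      = ((P-n).choose (k-n) * (k-n).factorial * (P-k).factorial)
        * ((K+P).choose (K+n) * (K+n).factorial) * (K+k).factorial := by ring
    _ = (K+P).choose (K+n) * (K+n).factorial * (P-n).factorial * (K+k).factorial := by
        rw [g1]; ring
    _ = (K+P).factorial * (K+k).factorial := by rw [g2]
    _ = (K+P).factorial * ((K+k).choose (k-n) * (k-n).factorial * (K+n).factorial) := by rw [g3]
    _ = (K+P).factorial * (K+k).choose (k-n) * ((K+n).factorial * (k-n).factorial) := by ring

private lemma natkey (A K P k : ℕ) (hk : k ≤ P) :
    (∑ n ∈ range (k+1), A.choose n * ((K+P).choose (K+n) * (P-n).choose (k-n)))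
        * ((K+k).factorial * (P-k).factorial)
      = (K+P).factorial * (A+K+k).choose k := by
  rw [Finset.sum_mul]
  have h : ∀ n ∈ range (k+1),
      A.choose n * ((K+P).choose (K+n) * (P-n).choose (k-n)) * ((K+k).factorial * (P-k).factorial)
        = (K+P).factorial * (A.choose n * (K+k).choose (k-n)) := by
    intro n hn
    rw [mem_range] at hn
    have hp := perterm K P n k (by omega) hk
    calc A.choose n * ((K+P).choose (K+n) * (P-n).choose (k-n)) * ((K+k).factorial * (P-k).factorial)
        = A.choose n * ((K+P).choose (K+n) * (P-n).choose (k-n) * ((K+k).factorial * (P-k).factorial)) := by ring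
      _ = A.choose n * ((K+P).factorial * (K+k).choose (k-n)) := by rw [hp]
      _ = (K+P).factorial * (A.choose n * (K+k).choose (k-n)) := by ring
  rw [Finset.sum_congr rfl h, ← Finset.mul_sum, vandermonde_sum, ← add_assoc]

private lemma nat2 (A K P k : ℕ) (hk : k ≤ P) :
    (K+P).choose K * P.choose k * (A+K+k).factorial * K.factorial * (P-k).factorial
      = (K+P).factorial * ((A+K+k).choose k * (A+K).factorial) := by
  have f1 : P.choose k * k.factorial * (P-k).factorial = P.factorial :=
    Nat.choose_mul_factorial_mul_factorial hk
  have f2 : (K+P).choose K * K.factorial * P.factorial = (K+P).factorial := by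
    have h := Nat.choose_mul_factorial_mul_factorial (show K ≤ K+P by omega)
    rwa [show K+P-K = P by omega] at h
  have f3 : (A+K+k).choose k * k.factorial * (A+K).factorial = (A+K+k).factorial := by
    have h := Nat.choose_mul_factorial_mul_factorial (show k ≤ A+K+k by omega)
    rwa [show A+K+k-k = A+K by omega] at h
  apply Nat.eq_of_mul_eq_mul_right (Nat.factorial_pos k)
  calc (K+P).choose K * P.choose k * (A+K+k).factorial * K.factorial * (P-k).factorial * k.factorial
      = ((K+P).choose K * K.factorial) * (P.choose k * k.factorial * (P-k).factorial) * (A+K+k).factorial := by ring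
    _ = (K+P).choose K * K.factorial * P.factorial * (A+K+k).factorial := by rw [f1]
    _ = (K+P).factorial * (A+K+k).factorial := by rw [f2]
    _ = (K+P).factorial * ((A+K+k).choose k * k.factorial * (A+K).factorial) := by rw [f3]
    _ = (K+P).factorial * ((A+K+k).choose k * (A+K).factorial) * k.factorial := by ring

private lemma key (A K P : ℕ) (x : ℝ) :
    ∑ n ∈ range (P+1), (-1:ℝ)^n * (A.choose n) * ((K+P).choose (K+n)) * x^n * (1-x)^(P-n)
      = ((K+P).choose K : ℝ) * ∑ k ∈ range (P+1), (-1:ℝ)^k * (P.choose k) *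
          (((A+K+k).factorial : ℝ) * (K.factorial : ℝ) /
            (((K+k).factorial : ℝ) * ((A+K).factorial : ℝ))) * x^k := by
  have expand : ∀ n ∈ range (P+1),
      (-1:ℝ)^n * (A.choose n) * ((K+P).choose (K+n)) * x^n * (1-x)^(P-n)
        = ∑ i ∈ range (P+1-n),
            (-1:ℝ)^(n+i) * (A.choose n) * ((K+P).choose (K+n)) * ((P-n).choose i) * x^(n+i) := by
    intro n hn
    rw [mem_range] at hn
    have h1 : (1:ℝ) - x = -x + 1 := by ring
    rw [h1, add_pow, show P+1-n = P-n+1 by omega, Finset.mul_sum]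
    refine Finset.sum_congr rfl fun i _ => ?_
    rw [neg_pow x i]
    ring
  rw [Finset.sum_congr rfl expand, triangle_sum P
    (fun n i => (-1:ℝ)^(n+i) * (A.choose n) * ((K+P).choose (K+n)) * ((P-n).choose i) * x^(n+i)),
    Finset.mul_sum]
  refine Finset.sum_congr rfl fun k hk => ?_
  rw [mem_range] at hk
  have hk' : k ≤ P := by omega
  have step1 : ∀ n ∈ range (k+1),
      (-1:ℝ)^(n+(k-n)) * (A.choose n) * ((K+P).choose (K+n)) * ((P-n).choose (k-n)) * x^(n+(k-n))
        = ((-1:ℝ)^k * x^k) * ((A.choose n * ((K+P).choose (K+n) * (P-n).choose (k-n)) : ℕ) : ℝ) := by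
    intro n hn
    rw [mem_range] at hn
    rw [show n+(k-n) = k by omega]
    push_cast
    ring
  rw [Finset.sum_congr rfl step1, ← Finset.mul_sum, ← Nat.cast_sum]
  have e1 : ((∑ n ∈ range (k+1), A.choose n * ((K+P).choose (K+n) * (P-n).choose (k-n)) : ℕ) : ℝ)
      * (((K+k).factorial : ℝ) * ((P-k).factorial : ℝ))
      = ((K+P).factorial : ℝ) * ((A+K+k).choose k : ℝ) := by
    exact_mod_cast congrArg (Nat.cast (R := ℝ)) (natkey A K P k hk')
  have e2 : ((K+P).choose K : ℝ) * (P.choose k : ℝ) * ((A+K+k).factorial : ℝ) * (K.factorial : ℝ)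
        * ((P-k).factorial : ℝ)
      = ((K+P).factorial : ℝ) * (((A+K+k).choose k : ℝ) * ((A+K).factorial : ℝ)) := by
    exact_mod_cast congrArg (Nat.cast (R := ℝ)) (nat2 A K P k hk')
  have hKk : ((K+k).factorial : ℝ) ≠ 0 := by positivity
  have hPk : ((P-k).factorial : ℝ) ≠ 0 := by positivity
  have hAK : ((A+K).factorial : ℝ) ≠ 0 := by positivity
  have goal2 : ((∑ n ∈ range (k+1), A.choose n * ((K+P).choose (K+n) * (P-n).choose (k-n)) : ℕ) : ℝ)
      = ((K+P).choose K : ℝ) * (P.choose k : ℝ) *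
          (((A+K+k).factorial : ℝ) * (K.factorial : ℝ) /
            (((K+k).factorial : ℝ) * ((A+K).factorial : ℝ))) := by
    have hrw : ((K+P).choose K : ℝ) * (P.choose k : ℝ) *
          (((A+K+k).factorial : ℝ) * (K.factorial : ℝ) /
            (((K+k).factorial : ℝ) * ((A+K).factorial : ℝ)))
        = (((K+P).choose K : ℝ) * (P.choose k : ℝ) * (((A+K+k).factorial : ℝ) * (K.factorial : ℝ)))
          / (((K+k).factorial : ℝ) * ((A+K).factorial : ℝ)) := by ring
    rw [hrw, eq_div_iff (by positivity)]
    apply mul_right_cancel₀ hPk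
    linear_combination ((A+K).factorial : ℝ) * e1 - e2
  rw [goal2]
  ring

private lemma sum_Icc_int (K M : ℕ) (f : ℤ → ℝ) :
    ∑ r ∈ Icc ((K:ℕ):ℤ) (((K:ℕ):ℤ)+((M:ℕ):ℤ)), f r = ∑ n ∈ range (M+1), f (((K:ℕ):ℤ)+(n:ℤ)) := by
  refine (Finset.sum_nbij' (fun (n : ℕ) => ((K:ℕ):ℤ)+(n:ℤ)) (fun (r : ℤ) => (r - ((K:ℕ):ℤ)).toNat)
    ?_ ?_ ?_ ?_ ?_).symm
  · intro n hn
    rw [mem_range] at hn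
    rw [mem_Icc]
    omega
  · intro r hr
    rw [mem_Icc] at hr
    rw [mem_range]
    omega
  · intro n hn
    omega
  · intro r hr
    rw [mem_Icc] at hr
    omega
  · intro n hn
    rfl

/-- Giacaglia's finite-sum form of the rotation coefficients `U_l^{m,s}(ε)`. -/
noncomputable def Ucoef (l m s : ℤ) (ε : ℝ) : ℝ :=
  ∑ r ∈ Finset.Icc (max 0 (-(m + s))) (min (l - s) (l - m)),
    (-1 : ℝ) ^ (l - m - r) * ((l + m).toNat.choose (m + s + r).toNat : ℝ) *
      ((l - m).toNat.choose r.toNat : ℝ) *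
      Real.cos (ε / 2) ^ (m + s + 2 * r) * Real.sin (ε / 2) ^ (-(m + s) + 2 * (l - r))

/-- Pochhammer symbol `(a)_n = a(a+1)⋯(a+n-1)`. -/
noncomputable def poch (a : ℝ) (n : ℕ) : ℝ := (ascPochhammer ℝ n).eval a

/-- The Gauss hypergeometric series `₂F₁(a,b,c;x) = Σ_n (a)_n(b)_n/((c)_n n!) xⁿ`. -/
noncomputable def hyp2F1 (a b c x : ℝ) : ℝ :=
  ∑' n : ℕ, poch a n * poch b n / (poch c n * (n.factorial : ℝ)) * x ^ n

private lemma poch_neg_nat (P k : ℕ) :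
    poch (-(P:ℝ)) k = (-1:ℝ)^k * ((k.factorial * P.choose k : ℕ) : ℝ) := by
  unfold poch
  rw [ascPochhammer_eval_neg_eq_descPochhammer, descPochhammer_eval_eq_descFactorial,
    Nat.descFactorial_eq_factorial_mul_choose]

private lemma poch_neg_nat_zero (P k : ℕ) (h : P < k) : poch (-(P:ℝ)) k = 0 := by
  unfold poch
  exact ascPochhammer_eval_neg_coe_nat_of_lt h

private lemma poch_succ_nat (Q k : ℕ) :
    poch ((Q:ℝ)+1) k * (Q.factorial : ℝ) = ((Q+k).factorial : ℝ) := by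
  unfold poch
  rw [show ((Q:ℝ)+1) = ((Q+1:ℕ):ℝ) by push_cast; ring, ← ascPochhammer_eval_cast,
    ascPochhammer_nat_eq_ascFactorial]
  norm_cast
  rw [mul_comm]
  exact Nat.factorial_mul_ascFactorial Q k

private lemma poch_succ_pos (Q k : ℕ) : 0 < poch ((Q:ℝ)+1) k :=
  ascPochhammer_pos k _ (by positivity)

private lemma hyp_eval (P Q K : ℕ) (x : ℝ) :
    hyp2F1 (-(P:ℝ)) ((Q:ℝ)+1) ((K:ℝ)+1) x
      = ∑ k ∈ range (P+1), (-1:ℝ)^k * (P.choose k) *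
          (((Q+k).factorial : ℝ) * (K.factorial : ℝ) /
            (((K+k).factorial : ℝ) * (Q.factorial : ℝ))) * x^k := by
  unfold hyp2F1
  rw [tsum_eq_sum (s := range (P+1)) (by
    intro k hk
    rw [mem_range] at hk
    rw [poch_neg_nat_zero P k (by omega)]
    simp)]
  refine Finset.sum_congr rfl fun k hk => ?_
  rw [poch_neg_nat]
  have hQ := poch_succ_nat Q k
  have hK := poch_succ_nat K k
  have hQ0 : (Q.factorial : ℝ) ≠ 0 := by positivity
  have hK0 : (K.factorial : ℝ) ≠ 0 := by positivity
  have hk0 : (k.factorial : ℝ) ≠ 0 := by positivity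
  have hpK : poch ((K:ℝ)+1) k ≠ 0 := (poch_succ_pos K k).ne'
  have hQ' : poch ((Q:ℝ)+1) k = ((Q+k).factorial : ℝ) / (Q.factorial : ℝ) := by
    rw [eq_div_iff hQ0]; exact hQ
  have hK' : poch ((K:ℝ)+1) k = ((K+k).factorial : ℝ) / (K.factorial : ℝ) := by
    rw [eq_div_iff hK0]; exact hK
  rw [hQ', hK']
  have hKk0 : ((K+k).factorial : ℝ) ≠ 0 := by positivity
  push_cast
  field_simp

/-- Jacobi/hypergeometric representation of `U_l^{m,s}` for `m + s < 0`:
`U_l^{m,s}(ε) = (-1)^{l-s} C(l-m, l+s) cos^{-m-s}(ε/2) sin^{m-s}(ε/2)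
  ₂F₁(-l-s, l-s+1, -m-s+1; cos²(ε/2))` for all `ε ∈ (0, π)`. -/
theorem stmt_10 (l m s : ℤ) (hl : 0 ≤ l) (hm : -l ≤ m) (hml : m ≤ l)
    (hs : -l ≤ s) (hsl : s ≤ l) (hms : m + s < 0) (ε : ℝ)
    (hε0 : 0 < ε) (hεπ : ε < Real.pi) :
    Ucoef l m s ε
      = (-1 : ℝ) ^ (l - s) * ((l - m).toNat.choose (l + s).toNat : ℝ) *
        Real.cos (ε / 2) ^ (-(m + s)) * Real.sin (ε / 2) ^ (m - s) *
        hyp2F1 ((-l - s : ℤ) : ℝ) ((l - s + 1 : ℤ) : ℝ) ((-m - s + 1 : ℤ) : ℝ)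
          (Real.cos (ε / 2) ^ 2) := by
  have hπ := Real.pi_pos
  have hc : 0 < Real.cos (ε/2) := Real.cos_pos_of_mem_Ioo ⟨by linarith, by linarith⟩
  have ht : 0 < Real.sin (ε/2) := Real.sin_pos_of_pos_of_lt_pi (by linarith) (by linarith)
  set c := Real.cos (ε/2) with hcdef
  set t := Real.sin (ε/2) with htdef
  have hcne : c ≠ 0 := hc.ne'
  have htne : t ≠ 0 := ht.ne'
  have hpyth : t^2 = 1 - c^2 := by
    have h := Real.sin_sq_add_cos_sq (ε/2)
    rw [← hcdef, ← htdef] at h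
    linarith
  set A := (l+m).toNat with hAdef
  set B := (l-m).toNat with hBdef
  set K := (-(m+s)).toNat with hKdef
  set P := (l+s).toNat with hPdef
  set Q := (l-s).toNat with hQdef
  have hA : (A:ℤ) = l+m := Int.toNat_of_nonneg (by omega)
  have hB : (B:ℤ) = l-m := Int.toNat_of_nonneg (by omega)
  have hK : (K:ℤ) = -(m+s) := Int.toNat_of_nonneg (by omega)
  have hP : (P:ℤ) = l+s := Int.toNat_of_nonneg (by omega)
  have hQ : (Q:ℤ) = l-s := Int.toNat_of_nonneg (by omega)
  have hBKP : B = K + P := by omega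
  have hQAK : Q = A + K := by omega
  -- rewrite the Ucoef side
  have hUcoef : Ucoef l m s ε
      = (-1:ℝ)^P * c^K * t^((m-s : ℤ)) *
        ∑ n ∈ range (P+1), (-1:ℝ)^n * (A.choose n) * (B.choose (K+n)) * (c^2)^n * (t^2)^(P-n) := by
    unfold Ucoef
    rw [← hcdef, ← htdef, ← hAdef, ← hBdef]
    set M := min A P with hMdef
    have hlo : max 0 (-(m+s)) = ((K:ℕ):ℤ) := by omega
    have hhi : min (l-s) (l-m) = ((K:ℕ):ℤ) + ((M:ℕ):ℤ) := by omega
    rw [hlo, hhi, sum_Icc_int K M]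
    have hterm : ∀ n ∈ range (M+1),
        (-1 : ℝ) ^ (l - m - (((K:ℕ):ℤ)+(n:ℤ))) * (A.choose (m + s + (((K:ℕ):ℤ)+(n:ℤ))).toNat : ℝ) *
          (B.choose (((K:ℕ):ℤ)+(n:ℤ)).toNat : ℝ) *
          c ^ (m + s + 2 * (((K:ℕ):ℤ)+(n:ℤ))) * t ^ (-(m + s) + 2 * (l - (((K:ℕ):ℤ)+(n:ℤ))))
        = (-1:ℝ)^P * c^K * t^((m-s : ℤ)) *
            ((-1:ℝ)^n * (A.choose n) * (B.choose (K+n)) * (c^2)^n * (t^2)^(P-n)) := by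
      intro n hn
      rw [mem_range] at hn
      have hn1 : (m + s + (((K:ℕ):ℤ)+(n:ℤ))).toNat = n := by omega
      have hn2 : ((((K:ℕ):ℤ))+(n:ℤ)).toNat = K + n := by omega
      have hsgnE : l - m - (((K:ℕ):ℤ)+(n:ℤ)) = ((P:ℕ):ℤ) - (n:ℤ) := by omega
      have hcE : m + s + 2 * (((K:ℕ):ℤ)+(n:ℤ)) = ((K + 2*n : ℕ) : ℤ) := by push_cast; omega
      have htE : -(m + s) + 2 * (l - (((K:ℕ):ℤ)+(n:ℤ)))
          = (m - s) + ((2*(P-n) : ℕ) : ℤ) := by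
        have hc2 : ((2*(P-n) : ℕ) : ℤ) = 2*((P:ℤ) - (n:ℤ)) := by
          push_cast [Nat.cast_sub (show n ≤ P by omega)]
          ring
        omega
      rw [hn1, hn2, hsgnE, hcE, htE]
      rw [zpow_natCast c, zpow_add₀ htne, zpow_natCast t]
      have hsgn : (-1:ℝ)^(((P:ℕ):ℤ)-(n:ℤ)) = (-1:ℝ)^P * (-1:ℝ)^n := by
        rw [zpow_sub₀ (by norm_num : (-1:ℝ) ≠ 0), zpow_natCast, zpow_natCast,
          div_eq_mul_inv, ← inv_pow]
        norm_num
      rw [hsgn, pow_add c, pow_mul c, pow_mul t]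
      ring
    rw [Finset.sum_congr rfl hterm]
    have hext : ∑ n ∈ range (M+1),
        ((-1:ℝ)^P * c^K * t^((m-s : ℤ)) *
          ((-1:ℝ)^n * (A.choose n) * (B.choose (K+n)) * (c^2)^n * (t^2)^(P-n)))
        = ∑ n ∈ range (P+1),
        ((-1:ℝ)^P * c^K * t^((m-s : ℤ)) *
          ((-1:ℝ)^n * (A.choose n) * (B.choose (K+n)) * (c^2)^n * (t^2)^(P-n))) := by
      apply Finset.sum_subset (Finset.range_subset_range.mpr (by omega : M+1 ≤ P+1))
      intro n hn hn'
      rw [mem_range] at hn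
      rw [mem_range] at hn'
      have hAn : A < n := by omega
      rw [Nat.choose_eq_zero_of_lt hAn]
      simp
    rw [hext, Finset.mul_sum]
  rw [hUcoef]
  have h1 : ((-l - s : ℤ) : ℝ) = -(P:ℝ) := by
    rw [show (-l-s:ℤ) = -((P:ℕ):ℤ) by omega]
    push_cast
    ring
  have h2 : ((l - s + 1 : ℤ) : ℝ) = (Q:ℝ)+1 := by
    rw [show (l-s+1:ℤ) = ((Q:ℕ):ℤ)+1 by omega]
    push_cast
    ring
  have h3 : ((-m - s + 1 : ℤ) : ℝ) = (K:ℝ)+1 := by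
    rw [show (-m-s+1:ℤ) = ((K:ℕ):ℤ)+1 by omega]
    push_cast
    ring
  rw [h1, h2, h3, hyp_eval P Q K (c^2)]
  rw [show (l-s : ℤ) = ((Q:ℕ):ℤ) by omega, zpow_natCast]
  rw [show (-(m+s) : ℤ) = ((K:ℕ):ℤ) by omega, zpow_natCast]
  have hsgnPQ : (-1:ℝ)^Q = (-1:ℝ)^P := by
    rcases Nat.even_or_odd P with h | h
    · have h2 : Even Q := by
        rw [Nat.even_iff] at h ⊢
        omega
      rw [h.neg_one_pow, h2.neg_one_pow]
    · have h2 : Odd Q := by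
        rw [Nat.odd_iff] at h ⊢
        omega
      rw [h.neg_one_pow, h2.neg_one_pow]
  rw [hsgnPQ]
  have hchoose : B.choose P = (K+P).choose K := by
    have h := Nat.choose_symm (show P ≤ K+P by omega)
    rw [show K+P-P = K by omega] at h
    rw [hBKP]
    exact h.symm
  rw [hchoose]
  have hkey := key A K P (c^2)
  rw [← hpyth] at hkey
  rw [hQAK, hBKP]
  rw [hkey]
  ring
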